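/- arXiv:2403.01945 — 3 statements merged into one kernel-verified Lean document; each statement's English description precedes it below -/
import Mathlib

section
/- Let w̄ and w be Markovian strategies, let μ̄ and μ be solutions of the FPK equation for w̄ and for w respectively, both with the same initial law ϑ, and let p̄ : I × ℝⁿ → ℝ be of class C^{1,2}, bounded together with ∂_t p̄, ∇_x p̄ and ∇²_x p̄, satisfying ∂_s p̄_s(x) + ∇p̄_s(x)·f(s,x,w̄_s(x)) + β Δp̄_s(x) = 0 for all (s,x) ∈ I × ℝⁿ and p̄_T = ℓ. Then the exact increment formula holds: ∫ ℓ dμ_T − ∫ ℓ dμ̄_T = ∫_0^T ∫ ∇p̄_s(x)·( f(s,x,w_s(x)) − f(s,x,w̄_s(x)) ) dμ_s(x) ds. -/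
/-!
Test both FPK equations against `p̄`. Along `μ̄` the integrand is `(∂ₛ + L^{w̄}) p̄ = 0`, so
`∫ ℓ dμ̄_T = ∫ p̄₀ dϑ`; along `μ` it is `(∂ₛ + L^w) p̄ = (∂ₛ + L^w) p̄ - (∂ₛ + L^{w̄}) p̄`, in which
only the drift terms survive.
-/

open MeasureTheory intervalIntegral

noncomputable section

/-- Euclidean space ℝⁿ. -/
abbrev Eu (n : ℕ) : Type := EuclideanSpace ℝ (Fin n)

/-- Laplacian of `φ` at `x`: the trace of the Hessian. -/
def lapl {n : ℕ} (φ : Eu n → ℝ) (x : Eu n) : ℝ :=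
  ∑ i : Fin n, fderiv ℝ (fun y => fderiv ℝ φ y (EuclideanSpace.single i 1)) x
    (EuclideanSpace.single i 1)

/-- `η` is of class C^{1,2} (C¹ in time, C² in space) and bounded together with
`∂ₜη`, `∇ₓη` and `∇²ₓη`. -/
structure C12Bdd {n : ℕ} (η : ℝ → Eu n → ℝ) : Prop where
  smooth_t : ∀ x, ContDiff ℝ 1 fun t => η t x
  smooth_x : ∀ t, ContDiff ℝ 2 (η t)
  bdd : ∃ C, ∀ t x, |η t x| ≤ C
  bdd_dt : ∃ C, ∀ t x, |deriv (fun s => η s x) t| ≤ C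
  bdd_grad : ∃ C, ∀ t x, ‖gradient (η t) x‖ ≤ C
  bdd_hess : ∃ C, ∀ t x, ‖fderiv ℝ (fderiv ℝ (η t)) x‖ ≤ C

/-- `μ : [0,T] → P(ℝⁿ)` is a (distributional) solution of the Fokker–Planck–Kolmogorov
equation for the Markovian strategy `w`, drift `f`, diffusion constant `β`, with initial
law `ϑ`. -/
def IsFPK {n m : ℕ} (T : ℝ) (f : ℝ → Eu n → Eu m → Eu n) (β : ℝ)
    (w : ℝ → Eu n → Eu m) (ϑ : Measure (Eu n)) (μ : ℝ → Measure (Eu n)) : Prop :=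
  (∀ t, IsProbabilityMeasure (μ t)) ∧
  μ 0 = ϑ ∧
  (∀ φ : Eu n → ℝ, Continuous φ → (∃ C, ∀ x, |φ x| ≤ C) →
    Measurable fun t => ∫ x, φ x ∂μ t) ∧
  (∀ η : ℝ → Eu n → ℝ, C12Bdd η → ∀ t ∈ Set.Icc (0:ℝ) T,
    (∫ x, η t x ∂μ t) - (∫ x, η 0 x ∂μ 0) =
      ∫ s in (0:ℝ)..t, ∫ x, (deriv (fun r => η r x) s
        + (inner ℝ (gradient (η s) x) (f s x (w s x)) : ℝ) + β * lapl (η s) x) ∂μ s)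

/-- The space-time operator `∂ₛ + L^w` whose adjoint is the FPK equation for the strategy `w`. -/
def kolmogorovOperator {n m : ℕ} (f : ℝ → Eu n → Eu m → Eu n) (β : ℝ)
    (w : ℝ → Eu n → Eu m) (η : ℝ → Eu n → ℝ) (s : ℝ) (x : Eu n) : ℝ :=
  deriv (fun r => η r x) s + inner ℝ (gradient (η s) x) (f s x (w s x)) + β * lapl (η s) x

theorem kolmogorovOperator_sub_kolmogorovOperator {n m : ℕ} (f : ℝ → Eu n → Eu m → Eu n)
    (β : ℝ) (w w' : ℝ → Eu n → Eu m) (η : ℝ → Eu n → ℝ) (s : ℝ) (x : Eu n) :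
    kolmogorovOperator f β w η s x - kolmogorovOperator f β w' η s x =
      inner ℝ (gradient (η s) x) (f s x (w s x) - f s x (w' s x)) := by
  rw [kolmogorovOperator, kolmogorovOperator, inner_sub_right]
  ring

namespace IsFPK

variable {n m : ℕ} {T β : ℝ} {f : ℝ → Eu n → Eu m → Eu n} {w : ℝ → Eu n → Eu m}
  {ϑ : Measure (Eu n)} {μ : ℝ → Measure (Eu n)} {η : ℝ → Eu n → ℝ} {t : ℝ}

theorem integral_sub_integral_initial (hμ : IsFPK T f β w ϑ μ) (hη : C12Bdd η)
    (ht : t ∈ Set.Icc 0 T) :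
    (∫ x, η t x ∂μ t) - (∫ x, η 0 x ∂ϑ) =
      ∫ s in (0:ℝ)..t, ∫ x, kolmogorovOperator f β w η s x ∂μ s :=
  hμ.2.1 ▸ hμ.2.2.2 η hη t ht

theorem integral_eq_integral_initial_of_kolmogorovOperator_eq_zero
    (hμ : IsFPK T f β w ϑ μ) (hη : C12Bdd η) (ht : t ∈ Set.Icc 0 T)
    (hη₀ : ∀ s ∈ Set.Icc 0 t, ∀ x, kolmogorovOperator f β w η s x = 0) :
    ∫ x, η t x ∂μ t = ∫ x, η 0 x ∂ϑ := by
  have hzero : (∫ s in (0:ℝ)..t, ∫ x, kolmogorovOperator f β w η s x ∂μ s) = 0 := by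
    refine (integral_congr (g := fun _ => 0) fun s hs => ?_).trans integral_zero
    rw [Set.uIcc_of_le ht.1] at hs
    simp only [hη₀ s hs, integral_zero]
  linarith [hμ.integral_sub_integral_initial hη ht]

end IsFPK

theorem exact_increment_formula_markovian_general
    {n m : ℕ} (T : ℝ) (hT : 0 < T)
    (f : ℝ → Eu n → Eu m → Eu n)
    (β : ℝ)
    (ℓ : Eu n → ℝ)
    (wb : ℝ → Eu n → Eu m)
    (w : ℝ → Eu n → Eu m)
    (ϑ : Measure (Eu n)) (μb μ : ℝ → Measure (Eu n))
    (hFPKb : IsFPK T f β wb ϑ μb) (hFPK : IsFPK T f β w ϑ μ)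
    (pb : ℝ → Eu n → ℝ) (hpb : C12Bdd pb)
    (hpde : ∀ s ∈ Set.Icc (0:ℝ) T, ∀ x : Eu n,
      deriv (fun r => pb r x) s + (inner ℝ (gradient (pb s) x) (f s x (wb s x)) : ℝ)
        + β * lapl (pb s) x = 0)
    (hterm : ∀ x, pb T x = ℓ x) :
    (∫ x, ℓ x ∂μ T) - (∫ x, ℓ x ∂μb T) =
      ∫ s in (0:ℝ)..T, ∫ x,
        (inner ℝ (gradient (pb s) x) (f s x (w s x) - f s x (wb s x)) : ℝ) ∂μ s := by
  have hT' : T ∈ Set.Icc 0 T := ⟨hT.le, le_rfl⟩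
  have hℓ : pb T = ℓ := funext hterm
  calc (∫ x, ℓ x ∂μ T) - (∫ x, ℓ x ∂μb T) = (∫ x, pb T x ∂μ T) - (∫ x, pb 0 x ∂ϑ) := by
        rw [← hℓ, hFPKb.integral_eq_integral_initial_of_kolmogorovOperator_eq_zero hpb hT' hpde]
    _ = ∫ s in (0:ℝ)..T, ∫ x, kolmogorovOperator f β w pb s x ∂μ s :=
        hFPK.integral_sub_integral_initial hpb hT'
    _ = _ := by
        refine integral_congr fun s hs => integral_congr_ae (Filter.Eventually.of_forall fun x => ?_)
        rw [Set.uIcc_of_le hT.le] at hs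
        have hwb : kolmogorovOperator f β wb pb s x = 0 := hpde s hs x
        simpa only [hwb, sub_zero] using kolmogorovOperator_sub_kolmogorovOperator f β w wb pb s x

theorem exact_increment_formula_markovian
    {n m : ℕ} (hn : 1 ≤ n) (hm : 1 ≤ m) (T : ℝ) (hT : 0 < T)
    (U : Set (Eu m)) (hUne : U.Nonempty) (hUcp : IsCompact U)
    (f : ℝ → Eu n → Eu m → Eu n)
    (hfmeas : Measurable fun p : ℝ × Eu n × Eu m => f p.1 p.2.1 p.2.2)
    (hfbdd : ∃ C, ∀ t x υ, ‖f t x υ‖ ≤ C)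
    (β : ℝ) (hβ : 0 < β)
    (ℓ : Eu n → ℝ) (hℓ : ContDiff ℝ 2 ℓ) (hℓbdd : ∃ C, ∀ x, |ℓ x| ≤ C)
    (wb : ℝ → Eu n → Eu m)
    (hwbmeas : Measurable fun p : ℝ × Eu n => wb p.1 p.2)
    (hwbU : ∀ t x, wb t x ∈ U)
    (w : ℝ → Eu n → Eu m)
    (hwmeas : Measurable fun p : ℝ × Eu n => w p.1 p.2)
    (hwU : ∀ t x, w t x ∈ U)
    (ϑ : Measure (Eu n)) (μb μ : ℝ → Measure (Eu n))
    (hFPKb : IsFPK T f β wb ϑ μb) (hFPK : IsFPK T f β w ϑ μ)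
    (pb : ℝ → Eu n → ℝ) (hpb : C12Bdd pb)
    (hpde : ∀ s ∈ Set.Icc (0:ℝ) T, ∀ x : Eu n,
      deriv (fun r => pb r x) s + (inner ℝ (gradient (pb s) x) (f s x (wb s x)) : ℝ)
        + β * lapl (pb s) x = 0)
    (hterm : ∀ x, pb T x = ℓ x) :
    (∫ x, ℓ x ∂μ T) - (∫ x, ℓ x ∂μb T) =
      ∫ s in (0:ℝ)..T, ∫ x,
        (inner ℝ (gradient (pb s) x) (f s x (w s x) - f s x (wb s x)) : ℝ) ∂μ s :=
  exact_increment_formula_markovian_general T hT f β ℓ wb w ϑ μb μ hFPKb hFPK pb hpb hpde hterm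
end
end

section
/- Let w̄ and w be Markovian strategies, μ̄ and μ solutions of the FPK equation for w̄ and for w respectively with the same initial law ϑ, and p̄ a bounded C^{1,2} function (with bounded ∂_t p̄, ∇_x p̄, ∇²_x p̄) satisfying ∂_s p̄_s(x) + ∇p̄_s(x)·f(s,x,w̄_s(x)) + β Δp̄_s(x) = 0 and p̄_T = ℓ. Assume in addition that for almost every s ∈ I and every x ∈ ℝⁿ the comparison control w minimizes the Hamiltonian: ∇p̄_s(x)·f(s,x,w_s(x)) = min over υ ∈ U of ∇p̄_s(x)·f(s,x,υ). Then the descent property ∫ ℓ dμ_T ≤ ∫ ℓ dμ̄_T holds. -/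
open MeasureTheory intervalIntegral

noncomputable section

/-! Test both FPK equations against `p̄`: both start from `∫ p̄₀ dϑ`. Along `μ̄` the integrand
vanishes by the HJB equation, while along `μ` it is nonpositive because `w` minimizes the
Hamiltonian `∇p̄ · f`, so `∫ ℓ dμ_T ≤ ∫ p̄₀ dϑ = ∫ ℓ dμ̄_T`. -/

open Set

def kolmogorovOp {n m : ℕ} (f : ℝ → Eu n → Eu m → Eu n) (β : ℝ)
    (w : ℝ → Eu n → Eu m) (η : ℝ → Eu n → ℝ) (s : ℝ) (x : Eu n) : ℝ :=
  deriv (fun r => η r x) s + (inner ℝ (gradient (η s) x) (f s x (w s x)) : ℝ) + β * lapl (η s) x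

theorem kolmogorovOp_le_kolmogorovOp {n m : ℕ} {f : ℝ → Eu n → Eu m → Eu n} {β : ℝ}
    {w w' : ℝ → Eu n → Eu m} {η : ℝ → Eu n → ℝ} {s : ℝ} {x : Eu n}
    (h : (inner ℝ (gradient (η s) x) (f s x (w s x)) : ℝ) ≤
      inner ℝ (gradient (η s) x) (f s x (w' s x))) :
    kolmogorovOp f β w η s x ≤ kolmogorovOp f β w' η s x := by
  unfold kolmogorovOp
  linarith

theorem IsFPK.integral_eq {n m : ℕ} {T : ℝ} {f : ℝ → Eu n → Eu m → Eu n} {β : ℝ}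
    {w : ℝ → Eu n → Eu m} {ϑ : Measure (Eu n)} {μ : ℝ → Measure (Eu n)}
    (hμ : IsFPK T f β w ϑ μ) {η : ℝ → Eu n → ℝ} (hη : C12Bdd η) {t : ℝ} (ht : t ∈ Icc 0 T) :
    ∫ x, η t x ∂μ t = ∫ x, η 0 x ∂ϑ + ∫ s in (0:ℝ)..t, ∫ x, kolmogorovOp f β w η s x ∂μ s := by
  rw [← hμ.2.1]
  exact eq_add_of_sub_eq' (hμ.2.2.2 η hη t ht)

theorem intervalIntegral_integral_nonpos {α : Type*} [MeasurableSpace α] {ν : ℝ → Measure α}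
    {g : ℝ → α → ℝ} {T : ℝ} (hT : 0 ≤ T)
    (hg : ∀ᵐ s ∂(volume.restrict (Icc (0:ℝ) T)), ∀ x, g s x ≤ 0) :
    ∫ s in (0:ℝ)..T, ∫ x, g s x ∂ν s ≤ 0 := by
  rw [integral_of_le hT]
  refine integral_nonpos_of_ae (ae_restrict_of_ae_restrict_of_subset Ioc_subset_Icc_self ?_)
  filter_upwards [hg] with s hs using integral_nonpos hs

theorem intervalIntegral_integral_eq_zero {α : Type*} [MeasurableSpace α] {ν : ℝ → Measure α}
    {g : ℝ → α → ℝ} {T : ℝ} (hT : 0 ≤ T) (hg : ∀ s ∈ Icc (0:ℝ) T, ∀ x, g s x = 0) :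
    ∫ s in (0:ℝ)..T, ∫ x, g s x ∂ν s = 0 := by
  refine (integral_congr (g := fun _ => (0:ℝ)) fun s hs => ?_).trans integral_zero
  simp only [hg s (uIcc_of_le hT ▸ hs), integral_zero]

theorem descent_property_markovian_general
    {n m : ℕ} (T : ℝ) (hT : 0 < T)
    (U : Set (Eu m))
    (f : ℝ → Eu n → Eu m → Eu n)
    (β : ℝ)
    (ℓ : Eu n → ℝ)
    (wb : ℝ → Eu n → Eu m)
    (hwbU : ∀ t x, wb t x ∈ U)
    (w : ℝ → Eu n → Eu m)
    (ϑ : Measure (Eu n)) (μb μ : ℝ → Measure (Eu n))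
    (hFPKb : IsFPK T f β wb ϑ μb) (hFPK : IsFPK T f β w ϑ μ)
    (pb : ℝ → Eu n → ℝ) (hpb : C12Bdd pb)
    (hpde : ∀ s ∈ Set.Icc (0:ℝ) T, ∀ x : Eu n,
      deriv (fun r => pb r x) s + (inner ℝ (gradient (pb s) x) (f s x (wb s x)) : ℝ)
        + β * lapl (pb s) x = 0)
    (hterm : ∀ x, pb T x = ℓ x)
    (hmin : ∀ᵐ s ∂(volume.restrict (Set.Icc (0:ℝ) T)), ∀ x : Eu n, ∀ υ ∈ U,
      (inner ℝ (gradient (pb s) x) (f s x (w s x)) : ℝ) ≤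
        (inner ℝ (gradient (pb s) x) (f s x υ) : ℝ)) :
    (∫ x, ℓ x ∂μ T) ≤ ∫ x, ℓ x ∂μb T := by
  have hTmem : T ∈ Icc 0 T := ⟨hT.le, le_rfl⟩
  have hb := hFPKb.integral_eq hpb hTmem
  have h := hFPK.integral_eq hpb hTmem
  rw [funext hterm] at hb h
  have hzero : ∫ s in (0:ℝ)..T, ∫ x, kolmogorovOp f β wb pb s x ∂μb s = 0 :=
    intervalIntegral_integral_eq_zero hT.le hpde
  have hnonpos : ∫ s in (0:ℝ)..T, ∫ x, kolmogorovOp f β w pb s x ∂μ s ≤ 0 := by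
    refine intervalIntegral_integral_nonpos hT.le ?_
    filter_upwards [ae_restrict_mem measurableSet_Icc, hmin] with s hs hmins x
    exact (kolmogorovOp_le_kolmogorovOp (hmins x _ (hwbU s x))).trans_eq (hpde s hs x)
  linarith

theorem descent_property_markovian
    {n m : ℕ} (hn : 1 ≤ n) (hm : 1 ≤ m) (T : ℝ) (hT : 0 < T)
    (U : Set (Eu m)) (hUne : U.Nonempty) (hUcp : IsCompact U)
    (f : ℝ → Eu n → Eu m → Eu n)
    (hfmeas : Measurable fun p : ℝ × Eu n × Eu m => f p.1 p.2.1 p.2.2)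
    (hfbdd : ∃ C, ∀ t x υ, ‖f t x υ‖ ≤ C)
    (β : ℝ) (hβ : 0 < β)
    (ℓ : Eu n → ℝ) (hℓ : ContDiff ℝ 2 ℓ) (hℓbdd : ∃ C, ∀ x, |ℓ x| ≤ C)
    (wb : ℝ → Eu n → Eu m)
    (hwbmeas : Measurable fun p : ℝ × Eu n => wb p.1 p.2)
    (hwbU : ∀ t x, wb t x ∈ U)
    (w : ℝ → Eu n → Eu m)
    (hwmeas : Measurable fun p : ℝ × Eu n => w p.1 p.2)
    (hwU : ∀ t x, w t x ∈ U)
    (ϑ : Measure (Eu n)) (μb μ : ℝ → Measure (Eu n))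
    (hFPKb : IsFPK T f β wb ϑ μb) (hFPK : IsFPK T f β w ϑ μ)
    (pb : ℝ → Eu n → ℝ) (hpb : C12Bdd pb)
    (hpde : ∀ s ∈ Set.Icc (0:ℝ) T, ∀ x : Eu n,
      deriv (fun r => pb r x) s + (inner ℝ (gradient (pb s) x) (f s x (wb s x)) : ℝ)
        + β * lapl (pb s) x = 0)
    (hterm : ∀ x, pb T x = ℓ x)
    (hmin : ∀ᵐ s ∂(volume.restrict (Set.Icc (0:ℝ) T)), ∀ x : Eu n, ∀ υ ∈ U,
      (inner ℝ (gradient (pb s) x) (f s x (w s x)) : ℝ) ≤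
        (inner ℝ (gradient (pb s) x) (f s x υ) : ℝ)) :
    (∫ x, ℓ x ∂μ T) ≤ ∫ x, ℓ x ∂μb T :=
  descent_property_markovian_general T hT U f β ℓ wb hwbU w ϑ μb μ hFPKb hFPK pb hpb hpde hterm hmin
end
end

section
/- Let H : I × ℝⁿ × U → ℝ be bounded and continuous, and let μ : I → P(ℝⁿ) be a curve of Borel probability measures such that t ↦ ∫φ dμ_t is Borel measurable for every bounded continuous φ : ℝⁿ → ℝ. Then there exists a Borel measurable map u : I → U such that for every t ∈ I: ∫ H(t,x,u(t)) dμ_t(x) = min over υ ∈ U of ∫ H(t,x,υ) dμ_t(x); in particular, for each t the map υ ↦ ∫ H(t,x,υ) dμ_t(x) is continuous on U and its minimum over U is attained. -/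
open MeasureTheory intervalIntegral

noncomputable section

/-!
Choose the minimiser lexicographically: minimise `g t := ∫ H(t,x,·) dμ_t` over `U`, then the
first coordinate over the set of minimisers, then the second coordinate, and so on. The point so
selected is unique, hence determined by the successive minimal values, and it suffices to show
that these are measurable in `t`. Each of them is the minimum of a continuous function `f` over
the zero set, inside the compact `U`, of a nonnegative continuous penalty `h`; by compactness it
equals `sup_N min_U (f + N h)`, and a minimum over `U` of a function continuous in `υ` and
measurable in `t` is measurable, because it may be taken over a countable dense subset of `U`.
-/

open Set

section Penalty

variable {E : Type*} [TopologicalSpace E] {K : Set E} {f h : E → ℝ}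

theorem IsCompact.exists_nat_forall_lt_add_mul (hK : IsCompact K) (hf : Continuous f)
    (hh : Continuous h) (h0 : ∀ υ, 0 ≤ h υ) {c : ℝ} (hc : ∀ υ ∈ K, h υ = 0 → c < f υ) :
    ∃ N : ℕ, ∀ υ ∈ K, c < f υ + N * h υ := by
  have hcover : K ⊆ ⋃ N : ℕ, {υ | c < f υ + N * h υ} := by
    intro υ hυ
    rcases (h0 υ).eq_or_lt with hzero | hpos
    · exact mem_iUnion.2 ⟨0, by simpa using hc υ hυ hzero.symm⟩
    · obtain ⟨N, hN⟩ := exists_nat_gt ((c - f υ) / h υ)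
      refine mem_iUnion.2 ⟨N, ?_⟩
      have := (div_lt_iff₀ hpos).1 hN
      show c < f υ + N * h υ
      linarith
  have hmono : Monotone fun N : ℕ => {υ | c < f υ + N * h υ} := by
    intro N N' hNN' υ (hυ : c < f υ + N * h υ)
    calc c < f υ + N * h υ := hυ
      _ ≤ f υ + N' * h υ := by gcongr; exact h0 υ
  obtain ⟨N, hN⟩ := hK.elim_directed_cover _
    (fun N => isOpen_lt continuous_const (by fun_prop)) hcover hmono.directed_le
  exact ⟨N, hN⟩

/-- For `h ≥ 0` this is the minimum of `f` on `{z ∈ K | h z = 0}` (`isLeast_penaltyMin`); being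
built from infima over the fixed set `K`, it inherits measurability in parameters. -/
noncomputable def penaltyMin (K : Set E) (f h : E → ℝ) : ℝ :=
  ⨆ N : ℕ, ⨅ υ : K, f υ + N * h υ

theorem isLeast_penaltyMin (hK : IsCompact K) (hf : Continuous f) (hh : Continuous h)
    (h0 : ∀ υ, 0 ≤ h υ) (hZ : ∃ z ∈ K, h z = 0) :
    IsLeast (f '' {z ∈ K | h z = 0}) (penaltyMin K f h) := by
  have hZc : IsCompact {z ∈ K | h z = 0} := hK.inter_right (isClosed_eq hh continuous_const)
  obtain ⟨z, hz, hzmin⟩ := hZc.exists_isMinOn hZ hf.continuousOn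
  have hbdd (N : ℕ) : BddBelow (range fun υ : K => f υ + N * h υ) := by
    have := hK.bddBelow_image (f := fun x => f x + N * h x) (by fun_prop)
    rwa [image_eq_range] at this
  have hle (N : ℕ) {w : E} (hw : w ∈ {z ∈ K | h z = 0}) : ⨅ υ : K, f υ + N * h υ ≤ f w :=
    (ciInf_le (hbdd N) ⟨w, hw.1⟩).trans_eq (by simp [hw.2])
  refine ⟨⟨z, hz, le_antisymm ?_ (ciSup_le fun N => hle N hz)⟩, ?_⟩
  · refine le_of_forall_lt_imp_le_of_dense fun c hc => ?_
    obtain ⟨N, hN⟩ : ∃ N : ℕ, ∀ υ ∈ K, c < f υ + N * h υ :=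
      hK.exists_nat_forall_lt_add_mul hf hh h0 fun υ hυ hυ0 => hc.trans_le (hzmin ⟨hυ, hυ0⟩)
    have : Nonempty K := ⟨⟨z, hz.1⟩⟩
    exact (le_ciInf fun υ : K => (hN υ υ.2).le).trans
      (le_ciSup ⟨f z, forall_mem_range.2 fun N => hle N hz⟩ N)
  · rintro _ ⟨w, hw, rfl⟩
    exact ciSup_le fun N => hle N hw

end Penalty

section Measurability

variable {X E : Type*} [MeasurableSpace X] [TopologicalSpace E]

theorem measurable_iInf_of_continuousOn (K : Set E) [TopologicalSpace.SeparableSpace K]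
    {G : X → E → ℝ} (hc : ∀ t, ContinuousOn (G t) K) (hm : ∀ υ, Measurable fun t => G t υ) :
    Measurable fun t => ⨅ υ : K, G t υ := by
  obtain ⟨S, hScount, hSdense⟩ := TopologicalSpace.exists_countable_dense K
  have : Countable S := hScount.to_subtype
  have hS (t : X) : ⨅ s : S, G t s = ⨅ υ : K, G t υ :=
    hSdense.ciInf' (f := K.domRestrict (G t)) (hc t).domRestrict
  simpa only [hS] using Measurable.iInf fun s : S => hm s

theorem measurable_penaltyMin {K : Set E} [TopologicalSpace.SeparableSpace K] {f h : X → E → ℝ}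
    (hfc : ∀ t, Continuous (f t)) (hhc : ∀ t, Continuous (h t))
    (hfm : ∀ υ, Measurable fun t => f t υ) (hhm : ∀ υ, Measurable fun t => h t υ) :
    Measurable fun t => penaltyMin K (f t) (h t) :=
  Measurable.iSup fun _ => measurable_iInf_of_continuousOn K
    (fun t => ((hfc t).add (continuous_const.mul (hhc t))).continuousOn)
    (fun υ => (hfm υ).add (measurable_const.mul (hhm υ)))

end Measurability

section Lexicographic

variable {X E : Type*} (ψ : ℕ → X → E → ℝ) (K : Set E)

/-- `lexPenalty ψ K i t` vanishes exactly where `ψ j t = lexMin ψ K j t` for all `j < i`, and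
`lexMin ψ K i t` is the minimum of `ψ i t` over that part of `K`. -/
noncomputable def lexPenalty : ℕ → X → E → ℝ
  | 0 => fun _ _ => 0
  | i + 1 => fun t υ => lexPenalty i t υ + |ψ i t υ - penaltyMin K (ψ i t) (lexPenalty i t)|

noncomputable def lexMin (i : ℕ) (t : X) : ℝ :=
  penaltyMin K (ψ i t) (lexPenalty ψ K i t)

variable {ψ K}

theorem lexPenalty_succ (i : ℕ) (t : X) (υ : E) :
    lexPenalty ψ K (i + 1) t υ = lexPenalty ψ K i t υ + |ψ i t υ - lexMin ψ K i t| :=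
  rfl

theorem lexPenalty_nonneg (i : ℕ) (t : X) (υ : E) : 0 ≤ lexPenalty ψ K i t υ := by
  induction i with
  | zero => exact le_rfl
  | succ i ih => exact (lexPenalty_succ i t υ).symm ▸ add_nonneg ih (abs_nonneg _)

theorem lexPenalty_eq_zero_iff {i : ℕ} {t : X} {υ : E} :
    lexPenalty ψ K i t υ = 0 ↔ ∀ j < i, ψ j t υ = lexMin ψ K j t := by
  induction i with
  | zero => simp [lexPenalty]
  | succ i ih =>
    rw [lexPenalty_succ, add_eq_zero_iff_of_nonneg (lexPenalty_nonneg i t υ) (abs_nonneg _), ih,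
      abs_eq_zero, sub_eq_zero, Nat.forall_lt_succ_right]

variable [TopologicalSpace E]

theorem continuous_lexPenalty (hψc : ∀ i t, Continuous (ψ i t)) (i : ℕ) (t : X) :
    Continuous (lexPenalty ψ K i t) := by
  induction i with
  | zero => exact continuous_const
  | succ i ih => exact ih.add (((hψc i t).sub continuous_const).abs)

theorem isLeast_lexMin (hK : IsCompact K) (hne : K.Nonempty) (hψc : ∀ i t, Continuous (ψ i t))
    (i : ℕ) (t : X) :
    IsLeast (ψ i t '' {z ∈ K | ∀ j < i, ψ j t z = lexMin ψ K j t}) (lexMin ψ K i t) := by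
  have hZ (i : ℕ) : ∃ z ∈ K, lexPenalty ψ K i t z = 0 := by
    induction i with
    | zero => exact hne.imp fun z hz => ⟨hz, rfl⟩
    | succ i ih =>
      obtain ⟨z, ⟨hzK, hz0⟩, hzi⟩ := (isLeast_penaltyMin hK (hψc i t)
        (continuous_lexPenalty hψc i t) (lexPenalty_nonneg i t) ih).1
      exact ⟨z, hzK, by simp [lexPenalty_succ, hz0, hzi, lexMin]⟩
  simp_rw [← lexPenalty_eq_zero_iff]
  exact isLeast_penaltyMin hK (hψc i t) (continuous_lexPenalty hψc i t)
    (lexPenalty_nonneg i t) (hZ i)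

theorem measurable_lexMin [MeasurableSpace X] [TopologicalSpace.SeparableSpace K]
    (hψc : ∀ i t, Continuous (ψ i t)) (hψm : ∀ i υ, Measurable fun t => ψ i t υ) (i : ℕ) :
    Measurable (lexMin ψ K i) := by
  have hpen (i : ℕ) (υ : E) : Measurable fun t => lexPenalty ψ K i t υ := by
    induction i generalizing υ with
    | zero => exact measurable_const
    | succ i ih =>
      exact (ih υ).add (((hψm i υ).sub (measurable_penaltyMin (hψc i)
        (continuous_lexPenalty hψc i) (hψm i) ih)).abs)
  exact measurable_penaltyMin (hψc i) (continuous_lexPenalty hψc i) (hψm i) (hpen i)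

end Lexicographic

def lexCriteria {X : Type*} {m : ℕ} (g : X → Eu m → ℝ) : ℕ → X → Eu m → ℝ
  | 0 => g
  | j + 1 => fun _ υ => if h : j < m then υ ⟨j, h⟩ else 0

theorem exists_measurable_isMinOn {X : Type*} [MeasurableSpace X] {m : ℕ} {K : Set (Eu m)}
    (hK : IsCompact K) (hne : K.Nonempty) {g : X → Eu m → ℝ} (hgc : ∀ t, Continuous (g t))
    (hgm : ∀ υ, Measurable fun t => g t υ) :
    ∃ u : X → Eu m, Measurable u ∧ ∀ t, u t ∈ K ∧ IsMinOn (g t) K (u t) := by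
  set ψ := lexCriteria g
  have hψc : ∀ i t, Continuous (ψ i t) := by
    rintro (_ | j) t
    · exact hgc t
    · by_cases h : j < m
      · simpa [ψ, lexCriteria, h] using PiLp.continuous_apply 2 _ (⟨j, h⟩ : Fin m)
      · simpa [ψ, lexCriteria, h] using continuous_const
  have hψm : ∀ i υ, Measurable fun t => ψ i t υ := by
    rintro (_ | j) υ
    exacts [hgm υ, measurable_const]
  set u : X → Eu m := fun t => WithLp.toLp 2 fun j : Fin m => lexMin ψ K (j + 1) t
  refine ⟨u, (WithLp.measurable_toLp 2 _).comp
    (measurable_pi_lambda _ fun j => measurable_lexMin hψc hψm _), fun t => ?_⟩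
  obtain ⟨z, ⟨hzK, hz⟩, -⟩ := (isLeast_lexMin hK hne hψc (m + 1) t).1
  obtain rfl : z = u t := by
    ext j
    simpa [ψ, lexCriteria] using hz (j + 1) (by omega)
  have hgu : g t (u t) = lexMin ψ K 0 t := hz 0 m.succ_pos
  exact ⟨hzK, fun w hw => hgu ▸ (isLeast_lexMin hK hne hψc 0 t).2 ⟨w, ⟨hw, by simp⟩, rfl⟩⟩

section Integrals

variable {α : Type*} [MeasurableSpace α] [TopologicalSpace α] [OpensMeasurableSpace α]

theorem continuous_integral_of_continuous_of_bounded {Y : Type*} [TopologicalSpace Y]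
    [FirstCountableTopology Y] (ν : Measure α) [IsFiniteMeasure ν] {F : Y → α → ℝ} (hF : Continuous (Function.uncurry F))
    {C : ℝ} (hC : ∀ y x, |F y x| ≤ C) :
    Continuous fun y => ∫ x, F y x ∂ν :=
  continuous_of_dominated
    (fun _ => (hF.comp (continuous_const.prodMk continuous_id)).aestronglyMeasurable)
    (fun y => ae_of_all _ fun x => (Real.norm_eq_abs _).trans_le (hC y x)) (integrable_const C)
    (ae_of_all _ fun _ => hF.comp (continuous_id.prodMk continuous_const))

theorem measurable_integral_of_continuous_of_bounded {ι : Type*} [TopologicalSpace ι]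
    [TopologicalSpace.MetrizableSpace ι] [SecondCountableTopology ι] [MeasurableSpace ι]
    [OpensMeasurableSpace ι] (μ : ι → Measure α) [∀ t, IsFiniteMeasure (μ t)] {F : ι → α → ℝ}
    (hF : Continuous (Function.uncurry F)) {C : ℝ} (hC : ∀ s x, |F s x| ≤ C)
    (hμ : ∀ s, Measurable fun t => ∫ x, F s x ∂μ t) :
    Measurable fun t => ∫ x, F t x ∂μ t :=
  (measurable_uncurry_of_continuous_of_measurable
    (fun t => continuous_integral_of_continuous_of_bounded (μ t) hF hC) hμ).comp
    (measurable_id.prodMk measurable_id)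

end Integrals

theorem law_feedback_selection_general
    {n m : ℕ} (T : ℝ)
    (U : Set (Eu m)) (hUne : U.Nonempty) (hUcp : IsCompact U)
    (H : ℝ → Eu n → Eu m → ℝ)
    (hHbdd : ∃ C, ∀ t x υ, |H t x υ| ≤ C)
    (hHcont : Continuous fun p : ℝ × Eu n × Eu m => H p.1 p.2.1 p.2.2)
    (μ : ℝ → Measure (Eu n)) (hprob : ∀ t, IsProbabilityMeasure (μ t))
    (hmeas : ∀ φ : Eu n → ℝ, Continuous φ → (∃ C, ∀ x, |φ x| ≤ C) →
      Measurable fun t => ∫ x, φ x ∂μ t) :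
    ∃ u : ℝ → Eu m, Measurable u ∧ (∀ t, u t ∈ U) ∧
      ∀ t ∈ Set.Icc (0:ℝ) T,
        (ContinuousOn (fun υ => ∫ x, H t x υ ∂μ t) U) ∧
        ∀ υ ∈ U, (∫ x, H t x (u t) ∂μ t) ≤ ∫ x, H t x υ ∂μ t := by
  obtain ⟨C, hC⟩ := hHbdd
  have hgc (t : ℝ) : Continuous fun υ => ∫ x, H t x υ ∂μ t :=
    continuous_integral_of_continuous_of_bounded (μ t) (by fun_prop) fun υ x => hC t x υ
  have hgm (υ : Eu m) : Measurable fun t => ∫ x, H t x υ ∂μ t :=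
    measurable_integral_of_continuous_of_bounded μ (F := fun t x => H t x υ) (by fun_prop)
      (fun t x => hC t x υ) fun s => hmeas _ (by fun_prop) ⟨C, fun x => hC s x υ⟩
  obtain ⟨u, hu, hmin⟩ := exists_measurable_isMinOn hUcp hUne hgc hgm
  exact ⟨u, hu, fun t => (hmin t).1, fun t _ => ⟨(hgc t).continuousOn, fun υ hυ => (hmin t).2 hυ⟩⟩

theorem law_feedback_selection
    {n m : ℕ} (hn : 1 ≤ n) (hm : 1 ≤ m) (T : ℝ) (hT : 0 < T)
    (U : Set (Eu m)) (hUne : U.Nonempty) (hUcp : IsCompact U)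
    (H : ℝ → Eu n → Eu m → ℝ)
    (hHbdd : ∃ C, ∀ t x υ, |H t x υ| ≤ C)
    (hHcont : Continuous fun p : ℝ × Eu n × Eu m => H p.1 p.2.1 p.2.2)
    (μ : ℝ → Measure (Eu n)) (hprob : ∀ t, IsProbabilityMeasure (μ t))
    (hmeas : ∀ φ : Eu n → ℝ, Continuous φ → (∃ C, ∀ x, |φ x| ≤ C) →
      Measurable fun t => ∫ x, φ x ∂μ t) :
    ∃ u : ℝ → Eu m, Measurable u ∧ (∀ t, u t ∈ U) ∧
      ∀ t ∈ Set.Icc (0:ℝ) T,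
        (ContinuousOn (fun υ => ∫ x, H t x υ ∂μ t) U) ∧
        ∀ υ ∈ U, (∫ x, H t x (u t) ∂μ t) ≤ ∫ x, H t x υ ∂μ t :=
  law_feedback_selection_general T U hUne hUcp H hHbdd hHcont μ hprob hmeas

end
end
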